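/- Consider the map (ξ, η, χ) ↦ (x, y, φ) given by x = (η−ξ)cos(π(1+3ξ/2))/((2/3+ξ)(2/3+η)) − (π/2)sin(π(1+3ξ/2)) + cos(π(1+3ξ/2) + (2/3+η)(t − 5π/2 − χ))/(2/3+η) − 1/(2/3+ξ), y = (η−ξ)sin(π(1+3ξ/2))/((2/3+ξ)(2/3+η)) + (π/2)cos(π(1+3ξ/2)) + sin(π(1+3ξ/2) + (2/3+η)(t − 5π/2 − χ))/(2/3+η) + π/2 + χ, φ = (3π/2)(1+ξ) + (2/3+η)(t − 5π/2 − χ). At (ξ, η, χ) = (0, 0, 0) and t = 4π, the Jacobian determinant ∂(x,y,φ)/∂(ξ,η,χ) equals −27π/2 − 9π³/8, which is nonzero. -/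

import Mathlib

/-- Endpoint map at time `t = 4π` of the Dubins trajectory with control `u = 0` on
`[0, π/2+χ)`, `u = 2/3+ξ` on `[π/2+χ, 2π+χ)`, `u = 0` on `[2π+χ, 5π/2+χ)` and
`u = 2/3+η` afterwards, as a function of the parameters `(ξ, η, χ)`. -/
noncomputable def lemEndpointMap (p : ℝ × ℝ × ℝ) : ℝ × ℝ × ℝ :=
  let ξ := p.1
  let η := p.2.1
  let χ := p.2.2
  let t := 4 * Real.pi
  ((η - ξ) * Real.cos (Real.pi * (1 + 3 * ξ / 2)) / ((2 / 3 + ξ) * (2 / 3 + η))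
     - Real.pi / 2 * Real.sin (Real.pi * (1 + 3 * ξ / 2))
     + Real.cos (Real.pi * (1 + 3 * ξ / 2)
         + (2 / 3 + η) * (t - 5 * Real.pi / 2 - χ)) / (2 / 3 + η)
     - 1 / (2 / 3 + ξ),
   (η - ξ) * Real.sin (Real.pi * (1 + 3 * ξ / 2)) / ((2 / 3 + ξ) * (2 / 3 + η))
     + Real.pi / 2 * Real.cos (Real.pi * (1 + 3 * ξ / 2))
     + Real.sin (Real.pi * (1 + 3 * ξ / 2)
         + (2 / 3 + η) * (t - 5 * Real.pi / 2 - χ)) / (2 / 3 + η)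
     + Real.pi / 2 + χ,
   3 * Real.pi / 2 * (1 + ξ) + (2 / 3 + η) * (t - 5 * Real.pi / 2 - χ))

/-! At the base point the circular arc turns through `θ = π` and the final angle is `ψ = 2π`,
so the chain and quotient rules give the Jacobian
`[[9/2 + 3π²/4, -9/2, 0], [9π/4, 9π/4, 0], [3π/2, 3π/2, -2/3]]`: since `ψ = 2π`, a delay `χ`
moves the endpoint only to second order. Expanding along the last column gives
`-(2/3) (81π/4 + 27π³/16) = -27π/2 - 9π³/8 < 0`. -/

open ContinuousLinearMap Real

theorem HasFDerivAt.div {𝕜 E : Type*} [NontriviallyNormedField 𝕜] [NormedAddCommGroup E]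
    [NormedSpace 𝕜 E] {f g : E → 𝕜} {f' g' : E →L[𝕜] 𝕜} {x : E}
    (hf : HasFDerivAt f f' x) (hg : HasFDerivAt g g' x) (hx : g x ≠ 0) :
    HasFDerivAt (fun y => f y / g y) ((g x ^ 2)⁻¹ • (g x • f' - f x • g')) x := by
  simp only [div_eq_mul_inv]
  refine (hf.mul ((hasDerivAt_inv hx).comp_hasFDerivAt x hg)).congr_fderiv (ext fun v => ?_)
  simp only [add_apply, smul_apply, sub_apply, smul_eq_mul, Function.comp_apply]
  field_simp
  ring

section LinForm3

variable {R : Type*} [CommRing R]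

@[simps]
def tripleEquivFun : (R × R × R) ≃ₗ[R] (Fin 3 → R) where
  toFun p := ![p.1, p.2.1, p.2.2]
  invFun v := (v 0, v 1, v 2)
  map_add' p q := by ext i; fin_cases i <;> rfl
  map_smul' c p := by ext i; fin_cases i <;> rfl
  left_inv p := rfl
  right_inv v := by ext i; fin_cases i <;> rfl

variable [TopologicalSpace R] [IsTopologicalRing R]

def linForm3 (a b c : R) : R × R × R →L[R] R :=
  a • fst R R (R × R) + b • (fst R R R).comp (snd R R (R × R)) +
    c • (snd R R R).comp (snd R R (R × R))

@[simp]
theorem linForm3_apply (a b c : R) (p : R × R × R) :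
    linForm3 a b c p = a * p.1 + b * p.2.1 + c * p.2.2 := rfl

theorem det_prod_linForm3 (a b c d e f g h i : R) :
    ((linForm3 a b c).prod ((linForm3 d e f).prod (linForm3 g h i))).det
      = !![a, b, c; d, e, f; g, h, i].det := by
  rw [ContinuousLinearMap.det, ← LinearMap.det_toMatrix (Module.Basis.ofEquivFun tripleEquivFun)]
  congr 1
  ext j k
  fin_cases j <;> fin_cases k <;> simp [LinearMap.toMatrix_apply]

end LinForm3

theorem hasFDerivAt_turnAngle (p : ℝ × ℝ × ℝ) :
    HasFDerivAt (fun q : ℝ × ℝ × ℝ => π * (1 + 3 * q.1 / 2)) (linForm3 (3 * π / 2) 0 0) p := by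
  have h := ((((hasFDerivAt_fst (p := p)).const_mul 3).div (hasFDerivAt_const 2 _)
    two_ne_zero).const_add 1).const_mul π
  refine h.congr_fderiv (ext fun v => ?_)
  simp only [smul_zero, sub_zero, smul_apply, coe_fst', smul_eq_mul, linForm3_apply, zero_mul,
    add_zero]
  ring

theorem hasFDerivAt_finalAngle (p : ℝ × ℝ × ℝ) :
    HasFDerivAt
      (fun q : ℝ × ℝ × ℝ => π * (1 + 3 * q.1 / 2) + (2 / 3 + q.2.1) * (4 * π - 5 * π / 2 - q.2.2))
      (linForm3 (3 * π / 2) (3 * π / 2 - p.2.2) (-(2 / 3 + p.2.1))) p := by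
  have h := (hasFDerivAt_turnAngle p).add ((hasFDerivAt_snd.fst.const_add (2 / 3)).mul
    ((hasFDerivAt_const (4 * π - 5 * π / 2) _).sub hasFDerivAt_snd.snd))
  refine h.congr_fderiv (ext fun v => ?_)
  simp only [add_apply, smul_apply, neg_apply, comp_apply, coe_fst', coe_snd', smul_eq_mul,
    Pi.sub_apply, linForm3_apply, zero_sub, smul_neg, zero_mul, add_zero]
  ring

theorem hasFDerivAt_endpoint_x :
    HasFDerivAt (fun p => (lemEndpointMap p).1) (linForm3 (9 / 2 + 3 * π ^ 2 / 4) (-(9 / 2)) 0)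
      (0, 0, 0) := by
  have hξ := hasFDerivAt_fst (𝕜 := ℝ) (p := ((0 : ℝ), (0 : ℝ), (0 : ℝ)))
  have hη := (hasFDerivAt_snd (𝕜 := ℝ) (p := ((0 : ℝ), (0 : ℝ), (0 : ℝ)))).fst
  have hθ := hasFDerivAt_turnAngle (0, 0, 0)
  have hψ := hasFDerivAt_finalAngle (0, 0, 0)
  have h := (((((hη.sub hξ).mul hθ.cos).div
      ((hξ.const_add (2 / 3)).mul (hη.const_add (2 / 3))) (by norm_num)).sub
      (hθ.sin.const_mul (π / 2))).add (hψ.cos.div (hη.const_add (2 / 3)) (by norm_num))).sub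
      ((hasFDerivAt_const 1 _).div (hξ.const_add (2 / 3)) (by norm_num))
  have hψ₀ : π + 2 / 3 * (4 * π - 5 * π / 2) = 2 * π := by ring
  refine h.congr_fderiv (ext fun v => ?_)
  simp only [Pi.mul_apply, Pi.sub_apply, add_apply, sub_apply, smul_apply, neg_apply, comp_apply,
    coe_fst', coe_snd', smul_eq_mul, linForm3_apply, sin_pi, cos_pi, hψ₀, sin_two_pi, cos_two_pi,
    add_zero, sub_self, mul_zero, zero_div, mul_one, neg_zero, zero_smul, smul_zero, neg_smul,
    one_smul, neg_sub, zero_add, mul_neg, smul_add, sub_zero, zero_sub, smul_neg, sub_neg_eq_add,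
    zero_mul, neg_mul, one_mul]
  ring

theorem hasFDerivAt_endpoint_y :
    HasFDerivAt (fun p => (lemEndpointMap p).2.1) (linForm3 (9 * π / 4) (9 * π / 4) 0)
      (0, 0, 0) := by
  have hξ := hasFDerivAt_fst (𝕜 := ℝ) (p := ((0 : ℝ), (0 : ℝ), (0 : ℝ)))
  have hη := (hasFDerivAt_snd (𝕜 := ℝ) (p := ((0 : ℝ), (0 : ℝ), (0 : ℝ)))).fst
  have hχ := (hasFDerivAt_snd (𝕜 := ℝ) (p := ((0 : ℝ), (0 : ℝ), (0 : ℝ)))).snd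
  have hθ := hasFDerivAt_turnAngle (0, 0, 0)
  have hψ := hasFDerivAt_finalAngle (0, 0, 0)
  have h := (((((hη.sub hξ).mul hθ.sin).div
      ((hξ.const_add (2 / 3)).mul (hη.const_add (2 / 3))) (by norm_num)).add
      (hθ.cos.const_mul (π / 2))).add
      (hψ.sin.div (hη.const_add (2 / 3)) (by norm_num))).add_const (π / 2) |>.add hχ
  have hψ₀ : π + 2 / 3 * (4 * π - 5 * π / 2) = 2 * π := by ring
  refine h.congr_fderiv (ext fun v => ?_)
  simp only [Pi.mul_apply, Pi.sub_apply, add_apply, smul_apply, comp_apply, coe_snd', smul_eq_mul,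
    linForm3_apply, sin_pi, cos_pi, hψ₀, sin_two_pi, cos_two_pi, add_zero, sub_self, mul_zero,
    zero_div, mul_one, zero_smul, smul_zero, smul_add, neg_zero, sub_zero, one_smul, zero_add,
    neg_mul, zero_mul]
  ring

theorem hasFDerivAt_endpoint_heading :
    HasFDerivAt (fun p => (lemEndpointMap p).2.2) (linForm3 (3 * π / 2) (3 * π / 2) (-(2 / 3)))
      (0, 0, 0) := by
  have hφ : (fun p => (lemEndpointMap p).2.2) = fun q : ℝ × ℝ × ℝ =>
      π * (1 + 3 * q.1 / 2) + (2 / 3 + q.2.1) * (4 * π - 5 * π / 2 - q.2.2) + π / 2 := by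
    funext q
    simp only [lemEndpointMap]
    ring
  rw [hφ]
  exact ((hasFDerivAt_finalAngle (0, 0, 0)).add_const (π / 2)).congr_fderiv (by simp)

theorem lemEndpointMap_jacobian :
    (fderiv ℝ lemEndpointMap (0, 0, 0)).det
      = -(27 * Real.pi / 2) - 9 * Real.pi ^ 3 / 8 ∧
    (fderiv ℝ lemEndpointMap (0, 0, 0)).det ≠ 0 := by
  have hD := hasFDerivAt_endpoint_x.prodMk
    (hasFDerivAt_endpoint_y.prodMk hasFDerivAt_endpoint_heading)
  have hdet : (fderiv ℝ lemEndpointMap (0, 0, 0)).det = -(27 * π / 2) - 9 * π ^ 3 / 8 := by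
    rw [hD.fderiv, det_prod_linForm3, Matrix.det_fin_three]
    simp only [Matrix.of_apply, Matrix.cons_val', Matrix.cons_val_zero, Matrix.cons_val_one,
      Matrix.cons_val, Matrix.cons_val_fin_one, Fin.isValue]
    ring
  refine ⟨hdet, hdet ▸ ?_⟩
  nlinarith [pi_pos, pow_pos pi_pos 3]
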